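/- For integers m, n, the assignment x ↦ x, y ↦ y z^{n+1} x^{m+1} z^{-1}, z ↦ z extends to a group isomorphism from H_{m,n} = ⟨x,y,z ∣ x = [x^m,z^n][y,z]⟩ to H_{−m−1,−n−1}. -/

import Mathlib

/-!
In any group, `x = [x^m, z^n][y, z]` is equivalent to `[y, z] = z^{-n} x^{-m} z^n x^{m+1}`.
In this form, a direct computation shows that `x, y z^{n+1} x^{m+1} z⁻¹, z` satisfy the relation
of `H_{m,n}` whenever `x, y, z` satisfy that of `H_{-m-1,-n-1}`, and that
`x, z y z^{-n} x^{-m} z⁻¹, z` satisfy the relation of `H_{-m-1,-n-1}` whenever `x, y, z` satisfy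
that of `H_{m,n}`. The two induced homomorphisms are mutually inverse: on `y` each composite
reduces to `z y [y, z] z⁻¹ = y`.
-/

/-- The commutator convention of the paper: `[a,b] = a⁻¹ b⁻¹ a b`. -/
def cmt {G : Type*} [Group G] (a b : G) : G := a⁻¹ * b⁻¹ * a * b

/-- Relator set of `H_{m,n} = ⟨x,y,z ∣ x = [x^m,z^n][y,z]⟩` (generators `0 ↦ x`,
`1 ↦ y`, `2 ↦ z`). -/
def Hrels (m n : ℤ) : Set (FreeGroup (Fin 3)) :=
  {(FreeGroup.of 0)⁻¹ *
    (cmt ((FreeGroup.of 0) ^ m) ((FreeGroup.of 2) ^ n) *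
      cmt (FreeGroup.of 1) (FreeGroup.of 2))}

/-- The Baumslag group `H_{m,n}`. -/
def Hmn (m n : ℤ) : Type := PresentedGroup (Hrels m n)

instance (m n : ℤ) : Group (Hmn m n) := by unfold Hmn; infer_instance

section HRel

variable {G H : Type*} [Group G] [Group H] {m n : ℤ} {x y z : G}

lemma map_cmt {F : Type*} [FunLike F G H] [MonoidHomClass F G H] (f : F) (a b : G) :
    f (cmt a b) = cmt (f a) (f b) := by
  simp only [cmt, map_mul, map_inv]

def HRel (m n : ℤ) (x y z : G) : Prop := x = cmt (x ^ m) (z ^ n) * cmt y z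

lemma hRel_iff : HRel m n x y z ↔ cmt y z = z ^ (-n) * x ^ (-m) * z ^ n * x ^ (m + 1) := by
  rw [HRel, ← inv_mul_eq_iff_eq_mul]
  constructor
  · intro h
    rw [← h, cmt]
    group
  · intro h
    rw [h, cmt]
    group

lemma HRel.twist (h : HRel (-m - 1) (-n - 1) x y z) :
    HRel m n x (y * z ^ (n + 1) * x ^ (m + 1) * z⁻¹) z := by
  rw [hRel_iff] at h ⊢
  calc _ = z * x ^ (-m - 1) * z ^ (-n - 1) * cmt y z * z ^ n * x ^ (m + 1) := by
        simp only [cmt]; group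
    _ = z ^ (-n) * x ^ (-m) * z ^ n * x ^ (m + 1) := by rw [h]; group

lemma HRel.untwist (h : HRel m n x y z) :
    HRel (-m - 1) (-n - 1) x (z * y * z ^ (-n) * x ^ (-m) * z⁻¹) z := by
  rw [hRel_iff] at h ⊢
  calc _ = z * x ^ m * z ^ n * cmt y z * z ^ (-n - 1) * x ^ (-m) := by simp only [cmt]; group
    _ = z ^ (-(-n - 1)) * x ^ (-(-m - 1)) * z ^ (-n - 1) * x ^ (-m - 1 + 1) := by rw [h]; group

lemma HRel.untwist_twist (h : HRel m n x y z) :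
    z * y * z ^ (-n) * x ^ (-m) * z⁻¹ * z ^ (n + 1) * x ^ (m + 1) * z⁻¹ = y := by
  rw [hRel_iff] at h
  calc _ = z * y * (z ^ (-n) * x ^ (-m) * z ^ n * x ^ (m + 1)) * z⁻¹ := by group
    _ = y := by rw [← h, cmt]; group

lemma HRel.twist_untwist (h : HRel (-m - 1) (-n - 1) x y z) :
    z * (y * z ^ (n + 1) * x ^ (m + 1) * z⁻¹) * z ^ (-n) * x ^ (-m) * z⁻¹ = y := by
  rw [hRel_iff] at h
  calc _ = z * y * (z ^ (-(-n - 1)) * x ^ (-(-m - 1)) * z ^ (-n - 1) * x ^ (-m - 1 + 1)) * z⁻¹ := by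
        group
    _ = y := by rw [← h, cmt]; group

end HRel

namespace Hmn

variable {G : Type*} [Group G] {m n : ℤ}

def x : Hmn m n := PresentedGroup.of 0
def y : Hmn m n := PresentedGroup.of 1
def z : Hmn m n := PresentedGroup.of 2

lemma hRel : HRel m n (x : Hmn m n) y z := by
  rw [HRel, ← inv_mul_eq_one]
  exact PresentedGroup.one_of_mem (rels := Hrels m n) rfl

variable {a b c : G} (h : HRel m n a b c)

def lift : Hmn m n →* G :=
  PresentedGroup.toGroup (f := ![a, b, c]) <| by
    rintro r rfl
    simpa [map_cmt, inv_mul_eq_one, HRel] using h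

@[simp] lemma lift_x : lift h x = a := PresentedGroup.toGroup.of _
@[simp] lemma lift_y : lift h y = b := PresentedGroup.toGroup.of _
@[simp] lemma lift_z : lift h z = c := PresentedGroup.toGroup.of _

lemma hom_ext {f g : Hmn m n →* G} (hx : f x = g x) (hy : f y = g y) (hz : f z = g z) :
    f = g :=
  PresentedGroup.ext fun i => by fin_cases i <;> assumption

end Hmn

/-- `x ↦ x`, `y ↦ y z^{n+1} x^{m+1} z⁻¹`, `z ↦ z` extends to an isomorphism
`H_{m,n} ≅ H_{-m-1,-n-1}`. -/
theorem stmt_5 (m n : ℤ) :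
    ∃ φ : Hmn m n ≃* Hmn (-m - 1) (-n - 1),
      φ (PresentedGroup.of 0) = PresentedGroup.of 0 ∧
      φ (PresentedGroup.of 1) =
        PresentedGroup.of 1 * (PresentedGroup.of 2 : Hmn (-m - 1) (-n - 1)) ^ (n + 1) *
          (PresentedGroup.of 0 : Hmn (-m - 1) (-n - 1)) ^ (m + 1) *
          (PresentedGroup.of 2)⁻¹ ∧
      φ (PresentedGroup.of 2) = PresentedGroup.of 2 := by
  let φ : Hmn m n →* Hmn (-m - 1) (-n - 1) := Hmn.lift Hmn.hRel.twist
  let ψ : Hmn (-m - 1) (-n - 1) →* Hmn m n := Hmn.lift Hmn.hRel.untwist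
  have hψφ : ψ.comp φ = MonoidHom.id _ :=
    Hmn.hom_ext (by simp [φ, ψ]) (by simpa [φ, ψ] using Hmn.hRel.untwist_twist) (by simp [φ, ψ])
  have hφψ : φ.comp ψ = MonoidHom.id _ :=
    Hmn.hom_ext (by simp [φ, ψ]) (by simpa [φ, ψ] using Hmn.hRel.twist_untwist) (by simp [φ, ψ])
  exact ⟨φ.toMulEquiv ψ hψφ hφψ, (Hmn.lift_x _ : φ Hmn.x = Hmn.x),
    (Hmn.lift_y _ : φ Hmn.y = Hmn.y * Hmn.z ^ (n + 1) * Hmn.x ^ (m + 1) * Hmn.z⁻¹),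
    (Hmn.lift_z _ : φ Hmn.z = Hmn.z)⟩
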